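/- There exists an instance with nonlinear convex $f$ where the convexified Lagrangian dual bound is strictly weaker: with $f(x)=(x_1-0.5)^2+(x_2-0.5)^2$, $X=\{0,1\}^2$, $Z=\{(z_1,z_2):z_1=z_2\}$, and constraints $x_1=z_1$, $x_2=z_2$, one has $\zeta^{CLD}=\max_{\omega\in Z^\perp}\min_{x\in\operatorname{conv}(X)}[f(x)+\omega_1 x_1+\omega_2 x_2]=0$ while $\zeta^{LD}=\max_{\omega\in Z^\perp}\min_{x\in X}[f(x)+\omega_1 x_1+\omega_2 x_2]=1/2$; hence $\zeta^{CLD}<\zeta^{LD}$. -/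

import Mathlib

open RealInnerProductSpace

noncomputable def fEx (x : EuclideanSpace ℝ (Fin 2)) : ℝ :=
  (x 0 - 0.5) ^ 2 + (x 1 - 0.5) ^ 2

def XEx : Set (EuclideanSpace ℝ (Fin 2)) :=
  {x | (x 0 = 0 ∨ x 0 = 1) ∧ (x 1 = 0 ∨ x 1 = 1)}

def ZEx : Set (EuclideanSpace ℝ (Fin 2)) := {z | z 0 = z 1}

/-- `Z^⊥ = {υ : υᵀz = 0 for all z ∈ Z}`. -/
def ZperpEx : Set (EuclideanSpace ℝ (Fin 2)) := {w | ∀ z ∈ ZEx, ⟪w, z⟫ = (0 : ℝ)}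

/-!
Both duals are computed from a saddle point. For the convexified dual, the centre `(½, ½)` of
`conv X` is a minimiser of `f` with value `0`, and every `ω ∈ Z^⊥` satisfies `ω₁ + ω₂ = 0`, so
the Lagrangian at the centre is `0` for every admissible `ω`; at `ω = 0` the minimum over
`conv X` is `0`. For the integer dual, `f ≡ ½` on `X = {0,1}²`, and the Lagrangian at the
vertex `0` is `½` for every `ω`. Lagrangians with `ω ∈ Z^⊥` are bounded below on all of `ℝ²`,
so none of the infima takes Lean's junk value.
-/

theorem sSup_sInf_eq_of_isSaddle {ι α : Type*} {W : Set ι} {S : Set α} {L : ι → α → ℝ}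
    {c : ℝ} {ω₀ : ι} {x₀ : α} (hω₀ : ω₀ ∈ W) (hx₀ : x₀ ∈ S) (hle : ∀ x ∈ S, c ≤ L ω₀ x)
    (hge : ∀ ω ∈ W, L ω x₀ ≤ c) (hbdd : ∀ ω ∈ W, BddBelow {s | ∃ x ∈ S, s = L ω x}) :
    sSup {r | ∃ ω ∈ W, r = sInf {s | ∃ x ∈ S, s = L ω x}} = c := by
  have hinf_le : ∀ ω ∈ W, sInf {s | ∃ x ∈ S, s = L ω x} ≤ c := fun ω hω =>
    (csInf_le (hbdd ω hω) ⟨x₀, hx₀, rfl⟩).trans (hge ω hω)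
  have hinf_eq : sInf {s | ∃ x ∈ S, s = L ω₀ x} = c :=
    le_antisymm (hinf_le ω₀ hω₀) <| le_csInf ⟨_, x₀, hx₀, rfl⟩ <| by
      rintro s ⟨x, hx, rfl⟩
      exact hle x hx
  refine IsGreatest.csSup_eq ⟨⟨ω₀, hω₀, hinf_eq.symm⟩, ?_⟩
  rintro r ⟨ω, hω, rfl⟩
  exact hinf_le ω hω

noncomputable def lagrangianEx (ω x : EuclideanSpace ℝ (Fin 2)) : ℝ :=
  fEx x + ω 0 * x 0 + ω 1 * x 1

lemma zero_mem_ZperpEx : (0 : EuclideanSpace ℝ (Fin 2)) ∈ ZperpEx :=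
  fun z _ => inner_zero_left z

lemma add_eq_zero_of_mem_ZperpEx {ω : EuclideanSpace ℝ (Fin 2)} (hω : ω ∈ ZperpEx) :
    ω 0 + ω 1 = 0 := by
  simpa [PiLp.inner_apply, Fin.sum_univ_two] using hω (WithLp.toLp 2 fun _ => 1) rfl

lemma lagrangianEx_zero (x : EuclideanSpace ℝ (Fin 2)) : lagrangianEx 0 x = fEx x := by
  simp [lagrangianEx]

lemma zero_mem_XEx : (0 : EuclideanSpace ℝ (Fin 2)) ∈ XEx := ⟨Or.inl rfl, Or.inl rfl⟩

lemma fEx_nonneg (x : EuclideanSpace ℝ (Fin 2)) : 0 ≤ fEx x := by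
  unfold fEx
  positivity

lemma fEx_eq_of_mem_XEx {x : EuclideanSpace ℝ (Fin 2)} (hx : x ∈ XEx) : fEx x = 1 / 2 := by
  obtain ⟨h0 | h0, h1 | h1⟩ := hx <;> norm_num [fEx, h0, h1]

/-- `f x ≥ (x₁ - x₂)² / 2`, and on `Z^⊥` the linear term is `ω₁ (x₁ - x₂)`: complete the square. -/
lemma neg_sq_div_two_le_lagrangianEx {ω : EuclideanSpace ℝ (Fin 2)} (hω : ω ∈ ZperpEx)
    (x : EuclideanSpace ℝ (Fin 2)) : -(ω 0) ^ 2 / 2 ≤ lagrangianEx ω x := by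
  have hω₁ : ω 1 = -ω 0 := by linarith [add_eq_zero_of_mem_ZperpEx hω]
  unfold lagrangianEx fEx
  rw [hω₁]
  nlinarith [sq_nonneg (x 0 + x 1 - 1), sq_nonneg (x 0 - x 1 + ω 0)]

lemma bddBelow_lagrangianEx {ω : EuclideanSpace ℝ (Fin 2)} (hω : ω ∈ ZperpEx)
    (S : Set (EuclideanSpace ℝ (Fin 2))) : BddBelow {s | ∃ x ∈ S, s = lagrangianEx ω x} := by
  refine ⟨-(ω 0) ^ 2 / 2, ?_⟩
  rintro s ⟨x, -, rfl⟩
  exact neg_sq_div_two_le_lagrangianEx hω x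

lemma lagrangianEx_centre {ω : EuclideanSpace ℝ (Fin 2)} (hω : ω ∈ ZperpEx) :
    lagrangianEx ω (WithLp.toLp 2 fun _ => 1 / 2) = 0 := by
  have hsum := add_eq_zero_of_mem_ZperpEx hω
  norm_num [lagrangianEx, fEx]
  linarith

lemma lagrangianEx_zero_right (ω : EuclideanSpace ℝ (Fin 2)) : lagrangianEx ω 0 = 1 / 2 := by
  norm_num [lagrangianEx, fEx]

lemma centre_mem_convexHull_XEx :
    (WithLp.toLp 2 fun _ => 1 / 2 : EuclideanSpace ℝ (Fin 2)) ∈ convexHull ℝ XEx := by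
  have hone : (WithLp.toLp 2 fun _ => 1 : EuclideanSpace ℝ (Fin 2)) ∈ XEx :=
    ⟨Or.inr rfl, Or.inr rfl⟩
  convert convex_convexHull ℝ XEx (subset_convexHull ℝ XEx zero_mem_XEx)
    (subset_convexHull ℝ XEx hone)
    (by norm_num : (0 : ℝ) ≤ 1 / 2) (by norm_num : (0 : ℝ) ≤ 1 / 2) (by norm_num) using 1
  ext i
  simp

theorem stmt8 :
    sSup {r : ℝ | ∃ ω ∈ ZperpEx,
        r = sInf {s : ℝ | ∃ x ∈ convexHull ℝ XEx, s = fEx x + ω 0 * x 0 + ω 1 * x 1}} = 0 ∧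
    sSup {r : ℝ | ∃ ω ∈ ZperpEx,
        r = sInf {s : ℝ | ∃ x ∈ XEx, s = fEx x + ω 0 * x 0 + ω 1 * x 1}} = 1 / 2 ∧
    sSup {r : ℝ | ∃ ω ∈ ZperpEx,
        r = sInf {s : ℝ | ∃ x ∈ convexHull ℝ XEx, s = fEx x + ω 0 * x 0 + ω 1 * x 1}} <
      sSup {r : ℝ | ∃ ω ∈ ZperpEx,
        r = sInf {s : ℝ | ∃ x ∈ XEx, s = fEx x + ω 0 * x 0 + ω 1 * x 1}} := by
  have hCLD : sSup {r : ℝ | ∃ ω ∈ ZperpEx,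
      r = sInf {s : ℝ | ∃ x ∈ convexHull ℝ XEx, s = lagrangianEx ω x}} = 0 :=
    sSup_sInf_eq_of_isSaddle zero_mem_ZperpEx centre_mem_convexHull_XEx
      (fun x _ => (lagrangianEx_zero x).symm ▸ fEx_nonneg x)
      (fun _ hω => (lagrangianEx_centre hω).le) (fun _ hω => bddBelow_lagrangianEx hω _)
  have hLD : sSup {r : ℝ | ∃ ω ∈ ZperpEx,
      r = sInf {s : ℝ | ∃ x ∈ XEx, s = lagrangianEx ω x}} = 1 / 2 :=
    sSup_sInf_eq_of_isSaddle zero_mem_ZperpEx zero_mem_XEx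
      (fun x hx => by rw [lagrangianEx_zero, fEx_eq_of_mem_XEx hx])
      (fun ω _ => (lagrangianEx_zero_right ω).le)
      (fun _ hω => bddBelow_lagrangianEx hω _)
  exact ⟨hCLD, hLD, (hCLD.trans_lt (by norm_num)).trans_eq hLD.symm⟩
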